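/- arXiv:2504.19375 — 5 statements merged into one kernel-verified Lean document; each statement's English description precedes it below -/
import Mathlib

section
/- Let βk = β/(k+K) and εk = ε/(k+K)^q with q ∈ (1,2], p ≥ 0, β ≥ 2(q-1)/p, and p·βk ≤ 1 for all k. Then for all k ≥ 1, the sum Σ_{i=0}^{k-1} εi · Π_{j=i+1}^{k-1} (1 - p·βj) is at most (2/p)·(εk/βk). -/
open Real

lemma bern_neg {x r : ℝ} (hx : 0 ≤ x) (hr1 : -1 ≤ r) (hr2 : r ≤ 0) :
    1 + r * x ≤ (1 + x) ^ r := by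
  have hx1 : (0:ℝ) < 1 + x := by linarith
  have h1 : (1 + x) ^ (-r) ≤ 1 + (-r) * x :=
    rpow_one_add_le_one_add_mul_self (by linarith) (by linarith) (by linarith)
  have hpos : 0 < (1 + x) ^ (-r) := rpow_pos_of_pos hx1 _
  have h2 : (1 + x) ^ r = ((1 + x) ^ (-r))⁻¹ := by
    rw [← Real.rpow_neg hx1.le, neg_neg]
  rcases le_or_gt (1 + r * x) 0 with h | h
  · exact h.trans (rpow_pos_of_pos hx1 r).le
  · rw [h2]
    have hu : (1 + r * x) * ((1 + x) ^ (-r)) ≤ 1 := by nlinarith [mul_le_mul_of_nonneg_left h1 h.le, sq_nonneg (r * x)]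
    calc 1 + r * x = (1 + r * x) * ((1 + x) ^ (-r)) * ((1 + x) ^ (-r))⁻¹ := by
          field_simp
      _ ≤ 1 * ((1 + x) ^ (-r))⁻¹ := by
          apply mul_le_mul_of_nonneg_right hu (by positivity)
      _ = ((1 + x) ^ (-r))⁻¹ := one_mul _

lemma step_ineq (ε β p q : ℝ) (hε : 0 < ε) (hβ : 0 < β) (hp : 0 < p)
    (hq1 : 1 < q) (hq2 : q ≤ 2) (hβlb : β ≥ 2 * (q - 1) / p) (a : ℝ) (ha : 0 < a) :
    (2 / p) * ((ε / a ^ q) / (β / a)) * (1 - p * (β / a)) + ε / a ^ q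
      ≤ (2 / p) * ((ε / (a + 1) ^ q) / (β / (a + 1))) := by
  have hb : (0:ℝ) < a + 1 := by linarith
  have hA : (0:ℝ) < a ^ q := rpow_pos_of_pos ha q
  have hB : (0:ℝ) < (a + 1) ^ q := rpow_pos_of_pos hb q
  have hpβ2 : 2 * (q - 1) ≤ p * β := by
    rw [ge_iff_le, div_le_iff₀ hp] at hβlb; linarith
  -- key: a/a^q - (q-1)/a^q ≤ (a+1)/(a+1)^q
  have ea : a ^ (1 - q) = a / a ^ q := by
    rw [Real.rpow_sub ha, Real.rpow_one]
  have eb : (a + 1) ^ (1 - q) = (a + 1) / (a + 1) ^ q := by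
    rw [Real.rpow_sub hb, Real.rpow_one]
  have hsplit : ((a + 1) : ℝ) ^ (1 - q) = a ^ (1 - q) * (1 + 1 / a) ^ (1 - q) := by
    rw [← Real.mul_rpow ha.le (by positivity)]
    congr 1
    field_simp
  have hber : 1 + (1 - q) * (1 / a) ≤ (1 + 1 / a) ^ (1 - q) :=
    bern_neg (by positivity) (by linarith) (by linarith)
  have h1 : a ^ (1 - q) * (1 + (1 - q) * (1 / a)) ≤ (a + 1) ^ (1 - q) := by
    rw [hsplit]
    exact mul_le_mul_of_nonneg_left hber (rpow_nonneg ha.le _)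
  have key : a / a ^ q - (q - 1) / a ^ q ≤ (a + 1) / (a + 1) ^ q := by
    rw [ea, eb] at h1
    have : a / a ^ q * (1 + (1 - q) * (1 / a)) = a / a ^ q - (q - 1) / a ^ q := by
      field_simp
      ring
    linarith [this ▸ h1]
  have e1 : (2 / p) * ((ε / a ^ q) / (β / a)) = 2 * ε / (p * β) * (a / a ^ q) := by
    field_simp
  have e2 : (2 / p) * ((ε / (a + 1) ^ q) / (β / (a + 1)))
      = 2 * ε / (p * β) * ((a + 1) / (a + 1) ^ q) := by
    field_simp
  rw [e1, e2]
  have hc : 0 < 2 * ε / (p * β) := by positivity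
  have h3 : 2 * ε / (p * β) * (a / a ^ q - (q - 1) / a ^ q)
      ≤ 2 * ε / (p * β) * ((a + 1) / (a + 1) ^ q) :=
    mul_le_mul_of_nonneg_left key hc.le
  have e3 : 2 * ε / (p * β) * (a / a ^ q) * (1 - p * (β / a)) + ε / a ^ q
      = 2 * ε / (p * β) * (a / a ^ q) - ε / a ^ q := by
    field_simp
    ring
  rw [e3]
  have h4 : 2 * ε / (p * β) * (q - 1) ≤ ε := by
    rw [div_mul_eq_mul_div, div_le_iff₀ (by positivity)]
    nlinarith
  have h5 : 2 * ε / (p * β) * (a / a ^ q) - ε / a ^ q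
      ≤ 2 * ε / (p * β) * (a / a ^ q - (q - 1) / a ^ q) := by
    have : 2 * ε / (p * β) * ((q - 1) / a ^ q) ≤ ε / a ^ q := by
      rw [mul_div_assoc']
      gcongr
    linarith [mul_sub (2 * ε / (p * β)) (a / a ^ q) ((q - 1) / a ^ q)]
  linarith

theorem stmt_2 (ε β K p q : ℝ)
    (hε : 0 < ε) (hβ : 0 < β) (hK : 0 < K) (hp : 0 < p)
    (hq1 : 1 < q) (hq2 : q ≤ 2)
    (hβlb : β ≥ 2 * (q - 1) / p)
    (hpβ : ∀ k : ℕ, p * (β / ((k : ℝ) + K)) ≤ 1) :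
    ∀ k : ℕ, 1 ≤ k →
      ∑ i ∈ Finset.range k, (ε / ((i : ℝ) + K) ^ q) *
          ∏ j ∈ Finset.Ico (i + 1) k, (1 - p * (β / ((j : ℝ) + K)))
        ≤ (2 / p) * ((ε / ((k : ℝ) + K) ^ q) / (β / ((k : ℝ) + K))) := by
  intro k hk
  induction k, hk using Nat.le_induction with
  | base =>
    simp only [Finset.sum_range_one, Nat.cast_zero, Nat.cast_one, Finset.Ico_self,
      Finset.prod_empty, mul_one, zero_add]
    have hs := step_ineq ε β p q hε hβ hp hq1 hq2 hβlb K hK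
    have h0 : p * (β / K) ≤ 1 := by simpa using hpβ 0
    have hnn : 0 ≤ (2 / p) * ((ε / K ^ q) / (β / K)) * (1 - p * (β / K)) := by
      apply mul_nonneg (by positivity)
      linarith
    rw [show (1:ℝ) + K = K + 1 from add_comm 1 K]
    linarith
  | succ k hk ih =>
    have hka : (0:ℝ) < (k:ℝ) + K := add_pos_of_nonneg_of_pos (Nat.cast_nonneg k) hK
    have hsum : ∑ i ∈ Finset.range k, ε / ((i:ℝ) + K) ^ q *
          ∏ j ∈ Finset.Ico (i + 1) (k + 1), (1 - p * (β / ((j:ℝ) + K)))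
        = (∑ i ∈ Finset.range k, ε / ((i:ℝ) + K) ^ q *
            ∏ j ∈ Finset.Ico (i + 1) k, (1 - p * (β / ((j:ℝ) + K)))) *
          (1 - p * (β / ((k:ℝ) + K))) := by
      rw [Finset.sum_mul]
      apply Finset.sum_congr rfl
      intro i hi
      rw [Finset.prod_Ico_succ_top (Nat.succ_le_of_lt (Finset.mem_range.mp hi))]
      ring
    rw [Finset.sum_range_succ, hsum, Finset.Ico_self, Finset.prod_empty, mul_one]
    have ht : 0 ≤ 1 - p * (β / ((k:ℝ) + K)) := by linarith [hpβ k]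
    have hs := step_ineq ε β p q hε hβ hp hq1 hq2 hβlb ((k:ℝ) + K) hka
    have hmul := mul_le_mul_of_nonneg_right ih ht
    have hcast : ((k:ℝ) + K) + 1 = (((k+1 : ℕ)):ℝ) + K := by push_cast; ring
    rw [hcast] at hs
    linarith
end

section
/- Let βk = β/(k+K) with q ∈ (1,2], and define the sequence s_0 = 0, s_{k+1} = (1 - p·βk)·s_k + εk where εk = ε/(k+K)^q. If β ≥ 2(q-1)/p and p·βk ≤ 1 for all k, then s_k ≤ (2/p)·(εk/βk) for all k ≥ 0. -/
lemma key_ineq (x q : ℝ) (hx : 0 < x) (hq1 : 1 < q) (hq2 : q ≤ 2) :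
    (x - (q - 1)) * (x + 1) ^ q ≤ (x + 1) * x ^ q := by
  have hx1 : (0:ℝ) < x + 1 := by linarith
  have hA : (0:ℝ) < x ^ q := Real.rpow_pos_of_pos hx q
  have hB : (0:ℝ) < (x + 1) ^ q := Real.rpow_pos_of_pos hx1 q
  rcases le_or_gt (x - (q - 1)) 0 with h | h
  · nlinarith [mul_nonpos_of_nonpos_of_nonneg h hB.le]
  -- x > q - 1 > 0
  set b := q - 1 with hb
  have hb0 : 0 ≤ b := by simp [hb]; linarith
  have hb1 : b ≤ 1 := by simp [hb]; linarith
  have hsplitB : (x + 1) ^ q = (x + 1) ^ b * (x + 1) := by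
    rw [← Real.rpow_add_one (ne_of_gt hx1) b]; norm_num [hb]
  have hsplitA : x ^ q = x ^ b * x := by
    rw [← Real.rpow_add_one (ne_of_gt hx) b]; norm_num [hb]
  have hfact : x + 1 = x * (1 + 1/x) := by field_simp
  have hbern : (1 + 1/x) ^ b ≤ 1 + b * (1/x) :=
    rpow_one_add_le_one_add_mul_self ((by norm_num : (-1:ℝ) ≤ 0).trans (by positivity)) hb0 hb1
  have hmul : (x + 1) ^ b = x ^ b * (1 + 1/x) ^ b := by
    rw [hfact, Real.mul_rpow hx.le (by positivity)]
  have hxb : (0:ℝ) < x ^ b := Real.rpow_pos_of_pos hx b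
  have hBle : (x + 1) ^ b ≤ x ^ b * (1 + b * (1/x)) := by
    rw [hmul]
    exact mul_le_mul_of_nonneg_left hbern hxb.le
  -- (x - b) * (x+1)^b ≤ (x-b) * x^b * (1 + b/x) ≤ x^b * x
  have h2 : (x - b) * (x ^ b * (1 + b * (1/x))) ≤ x ^ b * x := by
    have : (x - b) * (1 + b * (1/x)) ≤ x := by
      rw [one_div]
      have hxne : x ≠ 0 := ne_of_gt hx
      have : (x - b) * (1 + b * x⁻¹) = (x^2 - b^2) / x := by
        field_simp; ring
      rw [this, div_le_iff₀ hx]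
      nlinarith
    nlinarith [hxb.le]
  have h3 : (x - b) * (x + 1) ^ b ≤ x ^ b * x := by
    calc (x - b) * (x + 1) ^ b ≤ (x - b) * (x ^ b * (1 + b * (1/x))) :=
          mul_le_mul_of_nonneg_left hBle h.le
      _ ≤ x ^ b * x := h2
  rw [hsplitA, hsplitB]
  nlinarith [hx1]

theorem stmt_3 (ε β K p q : ℝ)
    (hε : 0 < ε) (hβ : 0 < β) (hK : 0 < K) (hp : 0 < p)
    (hq1 : 1 < q) (hq2 : q ≤ 2)
    (hβlb : β ≥ 2 * (q - 1) / p)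
    (hpβ : ∀ k : ℕ, p * (β / ((k : ℝ) + K)) ≤ 1)
    (s : ℕ → ℝ) (hs0 : s 0 = 0)
    (hsrec : ∀ k : ℕ,
      s (k + 1) = (1 - p * (β / ((k : ℝ) + K))) * s k + ε / ((k : ℝ) + K) ^ q) :
    ∀ k : ℕ, s k ≤ (2 / p) * ((ε / ((k : ℝ) + K) ^ q) / (β / ((k : ℝ) + K))) := by
  intro k
  induction k with
  | zero =>
    rw [hs0]
    have h0 : (0:ℝ) < ((0:ℕ):ℝ) + K := by norm_num; exact hK
    have : (0:ℝ) < (((0:ℕ):ℝ) + K) ^ q := Real.rpow_pos_of_pos h0 q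
    positivity
  | succ k ih =>
    set x : ℝ := (k : ℝ) + K with hxdef
    have hx : 0 < x := by positivity
    have hx1 : ((k + 1 : ℕ) : ℝ) + K = x + 1 := by push_cast; ring
    have hA : (0:ℝ) < x ^ q := Real.rpow_pos_of_pos hx q
    have hxx1 : (0:ℝ) < x + 1 := by linarith
    have hB : (0:ℝ) < (x + 1) ^ q := Real.rpow_pos_of_pos hxx1 q
    have hrec := hsrec k
    have hpk := hpβ k
    have hkey := key_ineq x q hx hq1 hq2
    have hqβ : q - 1 ≤ p * β / 2 := by
      rw [ge_iff_le, div_le_iff₀ hp] at hβlb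
      linarith
    have hkey2 : (x - p * β / 2) * (x + 1) ^ q ≤ (x + 1) * x ^ q := by
      calc (x - p * β / 2) * (x + 1) ^ q ≤ (x - (q - 1)) * (x + 1) ^ q := by
            apply mul_le_mul_of_nonneg_right _ hB.le
            linarith
        _ ≤ (x + 1) * x ^ q := hkey
    rw [hx1]
    rw [hrec]
    -- s (k+1) ≤ (1 - p*β/x) * (2/p)*((ε/x^q)/(β/x)) + ε/x^q ≤ goal
    have hcoef : 0 ≤ 1 - p * (β / x) := by linarith
    have step1 : (1 - p * (β / x)) * s k + ε / x ^ q ≤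
        (1 - p * (β / x)) * ((2 / p) * ((ε / x ^ q) / (β / x))) + ε / x ^ q := by
      have := mul_le_mul_of_nonneg_left ih hcoef
      linarith
    refine le_trans step1 ?_
    have hLHS : (1 - p * (β / x)) * ((2 / p) * ((ε / x ^ q) / (β / x))) + ε / x ^ q
        = (2 * ε / (p * β)) * ((x - p * β / 2) / x ^ q) := by
      field_simp
      ring
    have hRHS : (2 / p) * ((ε / (x + 1) ^ q) / (β / (x + 1)))
        = (2 * ε / (p * β)) * ((x + 1) / (x + 1) ^ q) := by
      field_simp
    rw [hLHS, hRHS]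
    apply mul_le_mul_of_nonneg_left _ (by positivity)
    rw [div_le_div_iff₀ hA hB]
    nlinarith [hkey2]
end

section
/- Let βk = β/(k+K) with β ≥ 2/μ' and μ'·βk ≤ 1 for all k, where μ' > 0. Then for all k ≥ 0, Π_{j=0}^{k-1} (1 - μ'·βj) ≤ K/(k+K). -/
theorem stmt_5 (β K μ' : ℝ)
    (hβ : 0 < β) (hK : 0 < K) (hμ'0 : 0 < μ') (hμ'1 : μ' ≤ 1)
    (hβlb : β ≥ 2 / μ')
    (hμβ : ∀ j : ℕ, μ' * (β / ((j : ℝ) + K)) ≤ 1) :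
    ∀ k : ℕ, ∏ j ∈ Finset.range k, (1 - μ' * (β / ((j : ℝ) + K))) ≤ K / ((k : ℝ) + K) := by
  have hμβ2 : (2:ℝ) ≤ μ' * β := by
    calc (2:ℝ) = μ' * (2 / μ') := by field_simp
    _ ≤ μ' * β := by nlinarith
  intro k
  induction k with
  | zero => simp [div_self hK.ne']
  | succ n ih =>
    rw [Finset.prod_range_succ]
    have hden : (0:ℝ) < (n:ℝ) + K := by positivity
    have hfac0 : 0 ≤ 1 - μ' * (β / ((n : ℝ) + K)) := by linarith [hμβ n]
    have h2 : K / ((n:ℝ) + K) * (1 - μ' * (β / ((n : ℝ) + K))) ≤ K / (((n:ℝ) + 1) + K) := by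
      rw [div_mul_eq_mul_div, div_le_div_iff₀ hden (by positivity)]
      have hkey : μ' * (β / ((n:ℝ)+K)) * ((n:ℝ)+K) = μ' * β := by field_simp
      have hp0 : 0 ≤ μ' * (β / ((n:ℝ)+K)) := by positivity
      nlinarith [hμβ2, hK, hkey, hp0]
    calc _ ≤ K / ((n:ℝ) + K) * (1 - μ' * (β / ((n : ℝ) + K))) :=
          mul_le_mul_of_nonneg_right ih hfac0
    _ ≤ _ := by push_cast; exact h2
end

section
/- Suppose a nonnegative sequence S_k satisfies S_{k+1} ≤ (1 - μ'βk)S_k + c·βk² where βk = β/(k+K), μ' ∈ (0,1], β ≥ 2/μ', μ'βk ≤ 1, and c ≥ 0. Then S_k ≤ S_0·K/(k+K) + (2c/μ')·β/(k+K) for all k ≥ 0. -/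
/-!
The explicit bound `B k = S₀ K/(k+K) + (2c/μ') β/(k+K)` is a supersolution of the recursion:
with `a = k + K` and `m = μ'β ≥ 2`, one step of the recursion maps `B k` to
`S₀ K (1 - m/a)/a + (cβ/μ')(2 - m/a)/a`, and `(p - m/a)/a ≤ p/(a+1)` whenever `p ≤ m`.
Since the coefficients `1 - μ'βₖ` are nonnegative, `S k ≤ B k` follows by induction.
-/

theorem le_of_le_mul_add_of_mul_add_le {α : Type*} [Semiring α] [PartialOrder α]
    [IsOrderedRing α] {S B a b : ℕ → α} (ha : ∀ k, 0 ≤ a k)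
    (hS : ∀ k, S (k + 1) ≤ a k * S k + b k) (hB : ∀ k, a k * B k + b k ≤ B (k + 1))
    (h0 : S 0 ≤ B 0) (k : ℕ) : S k ≤ B k := by
  induction k with
  | zero => exact h0
  | succ k ih =>
    calc S (k + 1) ≤ a k * S k + b k := hS k
      _ ≤ a k * B k + b k := by gcongr; exact ha k
      _ ≤ B (k + 1) := hB k

theorem sub_div_div_le_div_add_one {a m p : ℝ} (ha : 0 < a) (hm : 0 ≤ m) (hpm : p ≤ m) :
    (p - m / a) / a ≤ p / (a + 1) := by
  have hm' : m ≤ m * (a + 1) / a := by rw [le_div_iff₀ ha]; nlinarith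
  rw [div_le_div_iff₀ ha (by linarith), sub_mul, div_mul_eq_mul_div]
  linarith

theorem one_sub_mul_bound_add_le {β K μ' c S₀ a : ℝ} (ha : 0 < a) (hK : 0 ≤ K) (hμ' : 0 < μ')
    (hc : 0 ≤ c) (hS₀ : 0 ≤ S₀) (hμβ : 2 ≤ μ' * β) :
    (1 - μ' * (β / a)) * (S₀ * (K / a) + (2 * c / μ') * (β / a)) + c * (β / a) ^ 2
      ≤ S₀ * (K / (a + 1)) + (2 * c / μ') * (β / (a + 1)) := by
  have hβ : 0 ≤ β := by nlinarith
  calc (1 - μ' * (β / a)) * (S₀ * (K / a) + (2 * c / μ') * (β / a)) + c * (β / a) ^ 2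
      = S₀ * K * ((1 - μ' * β / a) / a) + c * β / μ' * ((2 - μ' * β / a) / a) := by
        field_simp; ring
    _ ≤ S₀ * K * (1 / (a + 1)) + c * β / μ' * (2 / (a + 1)) := by
        have hstep (p : ℝ) (hp : p ≤ μ' * β) := sub_div_div_le_div_add_one ha (by linarith) hp
        gcongr ?_ + ?_
        · exact mul_le_mul_of_nonneg_left (hstep 1 (by linarith)) (by positivity)
        · exact mul_le_mul_of_nonneg_left (hstep 2 hμβ) (by positivity)
    _ = S₀ * (K / (a + 1)) + (2 * c / μ') * (β / (a + 1)) := by ring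

theorem stmt_14_general (β K μ' c : ℝ)
    (hK : 0 < K) (hμ'0 : 0 < μ') (hc : 0 ≤ c)
    (hβlb : β ≥ 2 / μ')
    (hμβ : ∀ k : ℕ, μ' * (β / ((k : ℝ) + K)) ≤ 1)
    (S : ℕ → ℝ) (hSnn : ∀ k, 0 ≤ S k)
    (hrec : ∀ k : ℕ,
      S (k + 1) ≤ (1 - μ' * (β / ((k : ℝ) + K))) * S k + c * (β / ((k : ℝ) + K)) ^ 2) :
    ∀ k : ℕ, S k ≤ S 0 * (K / ((k : ℝ) + K)) + (2 * c / μ') * (β / ((k : ℝ) + K)) := by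
  have h2 : 2 ≤ μ' * β := by rwa [ge_iff_le, div_le_iff₀' hμ'0] at hβlb
  refine le_of_le_mul_add_of_mul_add_le (fun k => sub_nonneg.2 (hμβ k)) hrec (fun k => ?_) ?_
  · have := one_sub_mul_bound_add_le (by positivity : (0 : ℝ) < k + K) hK.le hμ'0 hc (hSnn 0) h2
    rwa [Nat.cast_succ, add_right_comm]
  · have hβ : 0 ≤ β := by nlinarith
    have : 0 ≤ 2 * c / μ' * (β / K) := by positivity
    simp only [Nat.cast_zero, zero_add, div_self hK.ne', mul_one]
    linarith

theorem stmt_14 (β K μ' c : ℝ)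
    (hβ : 0 < β) (hK : 0 < K) (hμ'0 : 0 < μ') (hμ'1 : μ' ≤ 1) (hc : 0 ≤ c)
    (hβlb : β ≥ 2 / μ')
    (hμβ : ∀ k : ℕ, μ' * (β / ((k : ℝ) + K)) ≤ 1)
    (S : ℕ → ℝ) (hSnn : ∀ k, 0 ≤ S k)
    (hrec : ∀ k : ℕ,
      S (k + 1) ≤ (1 - μ' * (β / ((k : ℝ) + K))) * S k + c * (β / ((k : ℝ) + K)) ^ 2) :
    ∀ k : ℕ, S k ≤ S 0 * (K / ((k : ℝ) + K)) + (2 * c / μ') * (β / ((k : ℝ) + K)) :=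
  stmt_14_general β K μ' c hK hμ'0 hc hβlb hμβ S hSnn hrec
end

section
/- Suppose a nonnegative sequence T_m satisfies T_{m+1} ≤ (1 - μ'βm)T_m + c·αm·βm, where βm = β/(m+K), αm = α/(m+K)^a with a ∈ (1/2, 1), β ≥ 2a/μ', μ'βm ≤ 1 for all m, and c ≥ 0. Then T_m ≤ T_0·K/(m+K) + (2c/μ')·αm for all m ≥ 0. -/
open Real

private lemma key_ineq_s19 (x a : ℝ) (hx : 1 ≤ x) (ha0 : 0 < a) (ha1 : a ≤ 1) :
    (1 - a / x) / x ^ a ≤ 1 / (x + 1) ^ a := by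
  have hx0 : 0 < x := lt_of_lt_of_le one_pos hx
  have hxa : (0:ℝ) < x ^ a := Real.rpow_pos_of_pos hx0 a
  have hx1a : (0:ℝ) < (x + 1) ^ a := Real.rpow_pos_of_pos (by linarith) a
  rw [div_le_div_iff₀ hxa hx1a, one_mul]
  have hber : (1 + 1/x) ^ a ≤ 1 + a * (1/x) :=
    rpow_one_add_le_one_add_mul_self (by nlinarith [one_div_pos.mpr hx0]) ha0.le ha1
  have hsplit : (x + 1) ^ a = x ^ a * (1 + 1/x) ^ a := by
    rw [← Real.mul_rpow hx0.le (by positivity)]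
    congr 1
    field_simp
  rw [hsplit]
  have h1 : 0 ≤ 1 - a / x := by
    rw [sub_nonneg, div_le_one hx0]; linarith
  calc (1 - a / x) * (x ^ a * (1 + 1/x) ^ a)
      ≤ (1 - a / x) * (x ^ a * (1 + a * (1/x))) :=
        mul_le_mul_of_nonneg_left (mul_le_mul_of_nonneg_left hber hxa.le) h1
    _ ≤ x ^ a := by
        have h3 : (1 - a / x) * (1 + a * (1/x)) ≤ 1 := by
          have he : (1 - a/x) * (1 + a * (1/x)) = 1 - (a/x)^2 := by ring
          rw [he]
          nlinarith [sq_nonneg (a/x)]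
        calc (1 - a / x) * (x ^ a * (1 + a * (1/x)))
            = ((1 - a / x) * (1 + a * (1/x))) * x ^ a := by ring
          _ ≤ 1 * x ^ a := mul_le_mul_of_nonneg_right h3 hxa.le
          _ = x ^ a := one_mul _

theorem stmt_19 (α β K μ' c a : ℝ)
    (hα : 0 < α) (hβ : 0 < β) (hK : 0 < K) (hμ'0 : 0 < μ') (hμ'1 : μ' ≤ 1) (hc : 0 ≤ c)
    (ha1 : 1 / 2 < a) (ha2 : a < 1)
    (hβlb : β ≥ 2 * a / μ')
    (hμβ : ∀ m : ℕ, μ' * (β / ((m : ℝ) + K)) ≤ 1)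
    (T : ℕ → ℝ) (hTnn : ∀ m, 0 ≤ T m)
    (hrec : ∀ m : ℕ,
      T (m + 1) ≤ (1 - μ' * (β / ((m : ℝ) + K))) * T m +
        c * (α / ((m : ℝ) + K) ^ a) * (β / ((m : ℝ) + K))) :
    ∀ m : ℕ, T m ≤ T 0 * (K / ((m : ℝ) + K)) + (2 * c / μ') * (α / ((m : ℝ) + K) ^ a) := by
  have hb : 2 * a ≤ μ' * β := by
    have h := (div_le_iff₀ hμ'0).mp hβlb
    nlinarith
  have ha0 : 0 < a := by linarith
  have hb1 : 1 ≤ μ' * β := by linarith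
  intro m
  induction m with
  | zero =>
    simp only [Nat.cast_zero, zero_add]
    rw [div_self hK.ne']
    have h : 0 ≤ (2 * c / μ') * (α / K ^ a) := by positivity
    nlinarith [hTnn 0]
  | succ m ih =>
    set x : ℝ := (m : ℝ) + K with hxdef
    have hm : (0:ℝ) ≤ (m:ℝ) := Nat.cast_nonneg m
    have hx1 : 1 ≤ x := by
      have hbK := hμβ m
      rw [← mul_div_assoc, div_le_one (by linarith : (0:ℝ) < (m:ℝ) + K)] at hbK
      rw [hxdef]
      linarith
    have hx0 : 0 < x := lt_of_lt_of_le one_pos hx1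
    have hxa : (0:ℝ) < x ^ a := Real.rpow_pos_of_pos hx0 a
    have hx1a : (0:ℝ) < (x + 1) ^ a := Real.rpow_pos_of_pos (by linarith) a
    have hcast : ((m + 1 : ℕ) : ℝ) + K = x + 1 := by rw [hxdef]; push_cast; ring
    have hfac0 : 0 ≤ 1 - μ' * (β / x) := by
      have := hμβ m
      linarith
    -- Part A
    have hA : (1 - μ' * (β / x)) * (K / x) ≤ K / (x + 1) := by
      have h1 : 1 - μ' * (β / x) = (x - μ' * β) / x := by field_simp
      rw [h1, div_mul_div_comm, div_le_div_iff₀ (by positivity) (by linarith)]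
      nlinarith [mul_nonneg (mul_nonneg hK.le hx0.le) (sub_nonneg.mpr hb1),
        mul_nonneg hK.le (le_trans zero_le_one hb1)]
    -- Part B
    have hB : (1 - μ' * (β / x)) * ((2 * c / μ') * (α / x ^ a)) + c * (α / x ^ a) * (β / x)
        ≤ (2 * c / μ') * (α / (x + 1) ^ a) := by
      have heq : (1 - μ' * (β / x)) * ((2 * c / μ') * (α / x ^ a)) + c * (α / x ^ a) * (β / x)
          = (2 * c / μ') * α * ((1 - μ' * β / (2 * x)) / x ^ a) := by
        field_simp
        ring
      have hax : a / x ≤ μ' * β / (2 * x) := by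
        rw [div_le_div_iff₀ hx0 (by linarith : (0:ℝ) < 2 * x)]
        nlinarith
      have hmono : (1 - μ' * β / (2 * x)) / x ^ a ≤ (1 - a / x) / x ^ a :=
        (div_le_div_iff_of_pos_right hxa).mpr (by linarith)
      calc (1 - μ' * (β / x)) * ((2 * c / μ') * (α / x ^ a)) + c * (α / x ^ a) * (β / x)
          = (2 * c / μ') * α * ((1 - μ' * β / (2 * x)) / x ^ a) := heq
        _ ≤ (2 * c / μ') * α * ((1 - a / x) / x ^ a) :=
            mul_le_mul_of_nonneg_left hmono (by positivity)
        _ ≤ (2 * c / μ') * α * (1 / (x + 1) ^ a) :=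
            mul_le_mul_of_nonneg_left (key_ineq_s19 x a hx1 ha0 ha2.le) (by positivity)
        _ = (2 * c / μ') * (α / (x + 1) ^ a) := by ring
    have hstep := hrec m
    rw [← hxdef] at hstep
    have hmul : (1 - μ' * (β / x)) * T m
        ≤ (1 - μ' * (β / x)) * (T 0 * (K / x) + (2 * c / μ') * (α / x ^ a)) :=
      mul_le_mul_of_nonneg_left ih hfac0
    have hT0 : 0 ≤ T 0 := hTnn 0
    rw [hcast]
    calc T (m + 1) ≤ (1 - μ' * (β / x)) * T m + c * (α / x ^ a) * (β / x) := hstep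
      _ ≤ (1 - μ' * (β / x)) * (T 0 * (K / x) + (2 * c / μ') * (α / x ^ a))
            + c * (α / x ^ a) * (β / x) := by linarith
      _ = T 0 * ((1 - μ' * (β / x)) * (K / x))
            + ((1 - μ' * (β / x)) * ((2 * c / μ') * (α / x ^ a)) + c * (α / x ^ a) * (β / x)) := by
          ring
      _ ≤ T 0 * (K / (x + 1)) + (2 * c / μ') * (α / (x + 1) ^ a) := by
          have := mul_le_mul_of_nonneg_left hA hT0
          linarith
end
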